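/- Let q ∈ (0,1) with q > 1/2, and let p ∈ Δ_2 with p_1 > p_2. Then G^n(p) converges to (1, 0, 0) as n → ∞. -/

import Mathlib

open Filter Topology

/-- The map G = (G₁,G₂,G₃) on ℝ³ (with parameter q):
G₁(x) = x₁² + 2q x₁ x₃, G₂(x) = x₂² + 2q x₂ x₃,
G₃(x) = x₃² + 2 x₁ x₂ + 2(1−q) x₁ x₃ + 2(1−q) x₂ x₃. -/
noncomputable def Gmap (q : ℝ) (x : ℝ × ℝ × ℝ) : ℝ × ℝ × ℝ :=
  (x.1 ^ 2 + 2 * q * x.1 * x.2.2,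
   x.2.1 ^ 2 + 2 * q * x.2.1 * x.2.2,
   x.2.2 ^ 2 + 2 * x.1 * x.2.1 + 2 * (1 - q) * x.1 * x.2.2
     + 2 * (1 - q) * x.2.1 * x.2.2)

/-- The open simplex Δ₂ ⊆ ℝ³. -/
def simplex2 : Set (ℝ × ℝ × ℝ) :=
  {p | p.1 + p.2.1 + p.2.2 = 1 ∧ 0 < p.1 ∧ 0 < p.2.1 ∧ 0 < p.2.2}

/-!
With `a, b, c` the coordinates of `x ∈ Δ₂`, the first two coordinates of `G` factor as
`a (a + 2qc)` and `b (b + 2qc)`, so `a + b + c = 1` gives `G₁ - G₂ = (a - b)(1 + (2q - 1)c)`.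
For `q > 1/2` the gap `a - b` along the orbit is therefore nondecreasing and bounded by `1`,
and its increments dominate a fixed multiple of `c`, which forces `c → 0`. Since the gap stays
above its initial value `δ > 0`, the ratio `b / a` shrinks at least by the factor `1 - δ/2` at
every step, so `b → 0`, and then `a = 1 - b - c → 1`.
-/

open Set

theorem tendsto_zero_of_mul_le_sub_of_bddAbove {c d : ℕ → ℝ} {ε : ℝ} (hε : 0 < ε)
    (hc : ∀ n, 0 ≤ c n) (hd : BddAbove (range d)) (h : ∀ n, ε * c n ≤ d (n + 1) - d n) :
    Tendsto c atTop (𝓝 0) := by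
  have hmono : Monotone d :=
    monotone_nat_of_le_succ fun n => sub_nonneg.1 ((mul_nonneg hε.le (hc n)).trans (h n))
  have hlim := tendsto_atTop_ciSup hmono hd
  have hdiff : Tendsto (fun n => (d (n + 1) - d n) / ε) atTop (𝓝 0) := by
    simpa using ((hlim.comp (tendsto_add_atTop_nat 1)).sub hlim).div_const ε
  exact squeeze_zero hc (fun n => (le_div_iff₀' hε).2 (h n)) hdiff

theorem tendsto_zero_of_le_mul_of_lt_one {u : ℕ → ℝ} {k : ℝ} (hu : ∀ n, 0 ≤ u n)
    (hk0 : 0 ≤ k) (hk1 : k < 1) (h : ∀ n, u (n + 1) ≤ k * u n) : Tendsto u atTop (𝓝 0) :=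
  squeeze_zero hu (fun n => le_geom hk0 n fun m _ => h m) <| by
    simpa using (tendsto_pow_atTop_nhds_zero_of_lt_one hk0 hk1).mul_const (u 0)

section Gmap

variable {q : ℝ} {x : ℝ × ℝ × ℝ}

theorem Gmap_fst_eq (q : ℝ) (x : ℝ × ℝ × ℝ) :
    (Gmap q x).1 = x.1 * (x.1 + 2 * q * x.2.2) := by
  simp only [Gmap]; ring

theorem Gmap_snd_fst_eq (q : ℝ) (x : ℝ × ℝ × ℝ) :
    (Gmap q x).2.1 = x.2.1 * (x.2.1 + 2 * q * x.2.2) := by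
  simp only [Gmap]; ring

theorem Gmap_fst_sub_snd_fst (hx : x.1 + x.2.1 + x.2.2 = 1) :
    (Gmap q x).1 - (Gmap q x).2.1 = (x.1 - x.2.1) * (1 + (2 * q - 1) * x.2.2) := by
  rw [Gmap_fst_eq, Gmap_snd_fst_eq]
  linear_combination (x.1 - x.2.1) * hx

theorem Gmap_mem_simplex2 (hq0 : 0 ≤ q) (hq1 : q ≤ 1) (hx : x ∈ simplex2) :
    Gmap q x ∈ simplex2 := by
  obtain ⟨hs, ha, hb, hc⟩ := hx
  have h1q : 0 ≤ 1 - q := sub_nonneg.2 hq1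
  refine ⟨?_, ?_, ?_, ?_⟩ <;> simp only [Gmap]
  · linear_combination (x.1 + x.2.1 + x.2.2 + 1) * hs
  · have := mul_nonneg (mul_nonneg hq0 ha.le) hc.le
    nlinarith
  · have := mul_nonneg (mul_nonneg hq0 hb.le) hc.le
    nlinarith
  · have := mul_nonneg (mul_nonneg h1q ha.le) hc.le
    have := mul_nonneg (mul_nonneg h1q hb.le) hc.le
    nlinarith [mul_pos ha hb]

theorem fst_sub_snd_fst_le_Gmap (hq : 1 / 2 ≤ q) (hx : x ∈ simplex2) (h : x.2.1 ≤ x.1) :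
    x.1 - x.2.1 ≤ (Gmap q x).1 - (Gmap q x).2.1 := by
  rw [Gmap_fst_sub_snd_fst hx.1]
  have : 0 ≤ (2 * q - 1) * x.2.2 := mul_nonneg (by linarith) hx.2.2.2.le
  nlinarith

theorem mapsTo_Gmap (hq : 1 / 2 ≤ q) (hq1 : q ≤ 1) :
    MapsTo (Gmap q) {x ∈ simplex2 | x.2.1 ≤ x.1} {x ∈ simplex2 | x.2.1 ≤ x.1} :=
  fun x ⟨hx, h⟩ => ⟨Gmap_mem_simplex2 (by linarith) hq1 hx,
    sub_nonneg.1 ((sub_nonneg.2 h).trans (fst_sub_snd_fst_le_Gmap hq hx h))⟩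

theorem Gmap_snd_fst_div_fst_le (hq0 : 0 ≤ q) (hq1 : q ≤ 1) (hx : x ∈ simplex2) {δ : ℝ}
    (hδ : 0 ≤ δ) (hδx : δ ≤ x.1 - x.2.1) :
    (Gmap q x).2.1 / (Gmap q x).1 ≤ (1 - δ / 2) * (x.2.1 / x.1) := by
  obtain ⟨hs, ha, hb, hc⟩ := hx
  have hqc : 0 ≤ q * x.2.2 := mul_nonneg hq0 hc.le
  have hpos : 0 < x.1 + 2 * q * x.2.2 := by linarith
  have hfactor : x.2.1 + 2 * q * x.2.2 ≤ (1 - δ / 2) * (x.1 + 2 * q * x.2.2) := by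
    have : x.1 + 2 * q * x.2.2 ≤ 2 := by nlinarith
    nlinarith
  rw [Gmap_fst_eq, Gmap_snd_fst_eq, mul_div_mul_comm, mul_comm (1 - δ / 2)]
  gcongr
  exact (div_le_iff₀ hpos).2 hfactor

end Gmap

section Orbit

variable {q : ℝ} {p : ℝ × ℝ × ℝ}

theorem iterate_Gmap_mem (hq : 1 / 2 ≤ q) (hq1 : q ≤ 1) (hp : p ∈ simplex2)
    (h12 : p.2.1 ≤ p.1) (n : ℕ) : (Gmap q)^[n] p ∈ {x ∈ simplex2 | x.2.1 ≤ x.1} :=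
  (mapsTo_Gmap hq hq1).iterate n ⟨hp, h12⟩

theorem monotone_iterate_Gmap_fst_sub_snd_fst (hq : 1 / 2 ≤ q) (hq1 : q ≤ 1)
    (hp : p ∈ simplex2) (h12 : p.2.1 ≤ p.1) :
    Monotone fun n => ((Gmap q)^[n] p).1 - ((Gmap q)^[n] p).2.1 := by
  refine monotone_nat_of_le_succ fun n => ?_
  obtain ⟨hx, h⟩ := iterate_Gmap_mem hq hq1 hp h12 n
  simpa only [Function.iterate_succ_apply'] using fst_sub_snd_fst_le_Gmap hq hx h

theorem tendsto_iterate_Gmap_snd_snd (hq : 1 / 2 < q) (hq1 : q ≤ 1) (hp : p ∈ simplex2)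
    (h12 : p.2.1 < p.1) : Tendsto (fun n => ((Gmap q)^[n] p).2.2) atTop (𝓝 0) := by
  set d := fun n => ((Gmap q)^[n] p).1 - ((Gmap q)^[n] p).2.1
  have hmem := iterate_Gmap_mem hq.le hq1 hp h12.le
  have hmono := monotone_iterate_Gmap_fst_sub_snd_fst hq.le hq1 hp h12.le
  have hbdd : BddAbove (range d) := ⟨1, by
    rintro _ ⟨n, rfl⟩
    obtain ⟨⟨hs, -, hb, hc⟩, -⟩ := hmem n
    simp only [d]; linarith⟩
  refine tendsto_zero_of_mul_le_sub_of_bddAbove (ε := (2 * q - 1) * d 0)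
    (mul_pos (by linarith) (sub_pos.2 h12)) (fun n => (hmem n).1.2.2.2.le) hbdd fun n => ?_
  have hstep : d (n + 1) - d n = (2 * q - 1) * ((Gmap q)^[n] p).2.2 * d n := by
    simp only [d, Function.iterate_succ_apply', Gmap_fst_sub_snd_fst (hmem n).1.1]
    ring
  rw [hstep, mul_right_comm]
  exact mul_le_mul_of_nonneg_left (hmono (Nat.zero_le n))
    (mul_nonneg (by linarith) (hmem n).1.2.2.2.le)

theorem tendsto_iterate_Gmap_snd_fst (hq : 1 / 2 ≤ q) (hq1 : q ≤ 1) (hp : p ∈ simplex2)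
    (h12 : p.2.1 < p.1) : Tendsto (fun n => ((Gmap q)^[n] p).2.1) atTop (𝓝 0) := by
  have hmem := iterate_Gmap_mem hq hq1 hp h12.le
  have hmono := monotone_iterate_Gmap_fst_sub_snd_fst hq hq1 hp h12.le
  have hratio : Tendsto (fun n => ((Gmap q)^[n] p).2.1 / ((Gmap q)^[n] p).1) atTop (𝓝 0) := by
    refine tendsto_zero_of_le_mul_of_lt_one (k := 1 - (p.1 - p.2.1) / 2)
      (fun n => div_nonneg (hmem n).1.2.2.1.le (hmem n).1.2.1.le)
      (by linarith [hp.1, hp.2.2.1, hp.2.2.2]) (by linarith) fun n => ?_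
    simp only [Function.iterate_succ_apply']
    exact Gmap_snd_fst_div_fst_le (by linarith) hq1 (hmem n).1 (by linarith)
      (hmono (Nat.zero_le n))
  refine squeeze_zero (fun n => (hmem n).1.2.2.1.le) (fun n => ?_) hratio
  obtain ⟨⟨hs, ha, hb, hc⟩, -⟩ := hmem n
  exact (le_div_iff₀ ha).2 (mul_le_of_le_one_right hb.le (by linarith))

end Orbit

theorem tendsto_first_state_general (q : ℝ) (hq1 : q < 1)
    (hq : 1 / 2 < q) (p : ℝ × ℝ × ℝ) (hp : p ∈ simplex2) (h12 : p.2.1 < p.1) :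
    Tendsto (fun n => (Gmap q)^[n] p) atTop (𝓝 ((1 : ℝ), (0 : ℝ), (0 : ℝ))) := by
  have hb := tendsto_iterate_Gmap_snd_fst hq.le hq1.le hp h12
  have hc := tendsto_iterate_Gmap_snd_snd hq hq1.le hp h12
  have ha : Tendsto (fun n => ((Gmap q)^[n] p).1) atTop (𝓝 1) := by
    have hlim : Tendsto (fun n => 1 - ((Gmap q)^[n] p).2.1 - ((Gmap q)^[n] p).2.2) atTop
        (𝓝 (1 - 0 - 0)) := (tendsto_const_nhds.sub hb).sub hc
    rw [sub_zero, sub_zero] at hlim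
    exact hlim.congr fun n => by linarith [(iterate_Gmap_mem hq.le hq1.le hp h12.le n).1.1]
  exact ha.prodMk_nhds (hb.prodMk_nhds hc)

/-- If q > 1/2 and p₁ > p₂, then G^n(p) → (1,0,0). -/
theorem tendsto_first_state (q : ℝ) (hq0 : 0 < q) (hq1 : q < 1)
    (hq : 1 / 2 < q) (p : ℝ × ℝ × ℝ) (hp : p ∈ simplex2) (h12 : p.2.1 < p.1) :
    Tendsto (fun n => (Gmap q)^[n] p) atTop (𝓝 ((1 : ℝ), (0 : ℝ), (0 : ℝ))) :=
  tendsto_first_state_general q hq1 hq p hp h12
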